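/- Let $V : [T] \to \mathbb{R}$ with $V(0)=0$, $|V(t) - V(t-1)| \le 1$, and define for constants $C_1 = 42\sqrt{K\log(1/\delta)}$ a threshold. Suppose that for every interval $[t_1, t_2]$ on which $V(t) \ge C_1\sqrt{t}$ for all $t \in [t_1,t_2]$ it holds $V(t_2) - V(t_1 - 1) \le 11\sqrt{K t_2 \log(2/\delta)}$. Then $V(t) \le 53\sqrt{Kt\log(2/\delta)}$ for all $t \in [T]$. -/

import Mathlib

/-!
If `V t` exceeded the bound, consider the maximal run of times ending at `t` on which `V` stays
above `C₁ √s`. Just before that run `V` was either `V 0 = 0` or below the threshold, hence at most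
`42 √(K t log (2/δ))`; during the run it gained at most `11 √(K t log (2/δ))`.
-/

open Finset Real

theorem exists_maximal_run_ending_at {P : ℕ → Prop} {a n : ℕ} (han : a ≤ n) (hn : P n) :
    ∃ m ∈ Icc a n, (∀ r ∈ Icc m n, P r) ∧ (m = a ∨ ¬ P (m - 1)) := by
  classical
  have hex : ∃ k, a + k ≤ n ∧ ∀ r ∈ Icc (a + k) n, P r :=
    ⟨n - a, by omega, fun r hr => by
      rw [mem_Icc] at hr
      rwa [show r = n by omega]⟩
  obtain ⟨hkn, hrun⟩ := Nat.find_spec hex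
  refine ⟨a + Nat.find hex, mem_Icc.2 ⟨by omega, hkn⟩, hrun, ?_⟩
  rcases Nat.eq_zero_or_pos (Nat.find hex) with h0 | hpos
  · exact Or.inl (by omega)
  refine Or.inr fun hP => Nat.find_min hex (Nat.sub_lt hpos one_pos) ⟨by omega, fun r hr => ?_⟩
  rw [mem_Icc] at hr
  rcases Nat.lt_or_ge r (a + Nat.find hex) with hlt | hge
  · rwa [show r = a + Nat.find hex - 1 by omega]
  · exact hrun r (mem_Icc.2 ⟨hge, hr.2⟩)

theorem le_add_of_run_increment_le {V θ B : ℕ → ℝ} {T t : ℕ} {M : ℝ}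
    (hrun : ∀ t₁ t₂, 1 ≤ t₁ → t₁ ≤ t₂ → t₂ ≤ T →
      (∀ t ∈ Icc t₁ t₂, θ t ≤ V t) → V t₂ - V (t₁ - 1) ≤ B t₂)
    (ht : t ∈ Icc 1 T) (hV0 : V 0 ≤ M) (hθ : ∀ s ≤ t, θ s ≤ M) (hB : 0 ≤ B t) :
    V t ≤ M + B t := by
  rw [mem_Icc] at ht
  by_contra! hVt
  have hθt : θ t ≤ V t := by linarith [hθ t le_rfl]
  obtain ⟨m, hm, habove, hstart⟩ := exists_maximal_run_ending_at (P := fun r => θ r ≤ V r) ht.1 hθt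
  rw [mem_Icc] at hm
  have hbefore : V (m - 1) ≤ M := by
    rcases hstart with rfl | hbelow
    · exact hV0
    · exact (not_le.1 hbelow).le.trans (hθ _ (by omega))
  linarith [hrun m t hm.1 hm.2 ht.2 habove]

theorem sqrt_mul_log_one_div_mul_sqrt_le {K δ s t : ℝ} (hK : 0 ≤ K) (hδ : 0 < δ) (hst : s ≤ t)
    (hs : 0 ≤ s) : √(K * log (1 / δ)) * √s ≤ √(K * t * log (2 / δ)) := by
  have hlog : log (1 / δ) ≤ log (2 / δ) := log_le_log (by positivity) (by gcongr; norm_num)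
  rw [mul_right_comm, sqrt_mul' _ (hs.trans hst)]
  gcongr

theorem stmt_17_general (T K : ℕ) (δ : ℝ) (hδ0 : 0 < δ)
    (V : ℕ → ℝ) (hV0 : V 0 = 0)
    (C₁ : ℝ) (hC₁ : C₁ = 42 * Real.sqrt (K * Real.log (1 / δ)))
    (hint : ∀ t₁ t₂, 1 ≤ t₁ → t₁ ≤ t₂ → t₂ ≤ T →
      (∀ t ∈ Finset.Icc t₁ t₂, C₁ * Real.sqrt t ≤ V t) →
      V t₂ - V (t₁ - 1) ≤ 11 * Real.sqrt (K * t₂ * Real.log (2 / δ))) :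
    ∀ t ∈ Finset.Icc 1 T, V t ≤ 53 * Real.sqrt (K * t * Real.log (2 / δ)) := by
  intro t ht
  set A := √(K * t * log (2 / δ))
  have hθ : ∀ s ≤ t, C₁ * √s ≤ 42 * A := fun s hs => by
    rw [hC₁, mul_assoc]
    gcongr
    exact sqrt_mul_log_one_div_mul_sqrt_le K.cast_nonneg hδ0 (by exact_mod_cast hs) s.cast_nonneg
  have := le_add_of_run_increment_le (B := fun t => 11 * √(K * t * log (2 / δ))) hint ht
    (by rw [hV0]; positivity) hθ (by positivity)
  linarith

theorem stmt_17 (T K : ℕ) (hK : 1 ≤ K) (δ : ℝ) (hδ0 : 0 < δ) (hδ1 : δ < 1)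
    (hlog : 1 ≤ Real.log (1 / δ))
    (V : ℕ → ℝ) (hV0 : V 0 = 0)
    (hstep : ∀ t ∈ Finset.Icc 1 T, |V t - V (t - 1)| ≤ 1)
    (C₁ : ℝ) (hC₁ : C₁ = 42 * Real.sqrt (K * Real.log (1 / δ)))
    (hint : ∀ t₁ t₂, 1 ≤ t₁ → t₁ ≤ t₂ → t₂ ≤ T →
      (∀ t ∈ Finset.Icc t₁ t₂, C₁ * Real.sqrt t ≤ V t) →
      V t₂ - V (t₁ - 1) ≤ 11 * Real.sqrt (K * t₂ * Real.log (2 / δ))) :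
    ∀ t ∈ Finset.Icc 1 T, V t ≤ 53 * Real.sqrt (K * t * Real.log (2 / δ)) :=
  stmt_17_general T K δ hδ0 V hV0 C₁ hC₁ hint
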